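/- Let A be a Banach algebra, X a Banach A-bimodule, and n ≥ 1. If every continuous derivation from A into the (n+2)-th dual X^{(n+2)} is inner, then every continuous derivation from A into the n-th dual X^{(n)} is inner. -/

import Mathlib

/-!
The canonical embedding `ι_Y : Y → Y''` of any bimodule is a bimodule map, and so is the adjoint
`ι_Xᵗ : X''' → X'` of `ι_X`, which is a left inverse of `ι_{X'}`. Thus `X'` is a bimodule retract
of `X'''`: for a derivation `D` into `X'` the derivation `ι_{X'} ∘ D` is implemented by some `F`,
and then `D` is implemented by `ι_Xᵗ F`. For `n ≥ 1`, `X^{(n)}` is such a dual module.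
-/

open ContinuousLinearMap Filter Topology

namespace Paper

structure Bimod (A : Type*) [NormedRing A] [NormedAlgebra ℂ A]
    (X : Type*) [NormedAddCommGroup X] [NormedSpace ℂ X] where
  l : A → X →L[ℂ] X
  r : A → X →L[ℂ] X
  l_mul : ∀ a b x, l (a * b) x = l a (l b x)
  r_mul : ∀ a b x, r (a * b) x = r b (r a x)
  lr : ∀ a b x, l a (r b x) = r b (l a x)

variable {A : Type*} [NormedRing A] [NormedAlgebra ℂ A]
variable {X : Type*} [NormedAddCommGroup X] [NormedSpace ℂ X]

noncomputable def Bimod.dual (M : Bimod A X) : Bimod A (X →L[ℂ] ℂ) where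
  l a := (compL ℂ X X ℂ).flip (M.r a)
  r a := (compL ℂ X X ℂ).flip (M.l a)
  l_mul a b f := by ext x; simp [M.r_mul]
  r_mul a b f := by ext x; simp [M.l_mul]
  lr a b f := by ext x; simp [M.lr]

def IsDerivation (M : Bimod A X) (D : A →L[ℂ] X) : Prop :=
  ∀ a b, D (a * b) = M.l a (D b) + M.r b (D a)

def IsInner (M : Bimod A X) (D : A →L[ℂ] X) : Prop :=
  ∃ x, ∀ a, D a = M.l a x - M.r a x

noncomputable def Bimod.restrict (M : Bimod A X) (Y : Submodule ℂ X)
    (hl : ∀ a, ∀ y ∈ Y, M.l a y ∈ Y) (hr : ∀ a, ∀ y ∈ Y, M.r a y ∈ Y) :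
    Bimod A Y where
  l a := ((M.l a).comp Y.subtypeL).codRestrict Y fun y => hl a y y.2
  r a := ((M.r a).comp Y.subtypeL).codRestrict Y fun y => hr a y y.2
  l_mul a b y := Subtype.ext (M.l_mul a b y)
  r_mul a b y := Subtype.ext (M.r_mul a b y)
  lr a b y := Subtype.ext (M.lr a b y)

noncomputable def algBimod (A : Type*) [NormedRing A] [NormedAlgebra ℂ A] : Bimod A A where
  l a := ContinuousLinearMap.mul ℂ A a
  r a := (ContinuousLinearMap.mul ℂ A).flip a
  l_mul a b x := mul_assoc a b x
  r_mul a b x := (mul_assoc x a b).symm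
  lr a b x := (mul_assoc a x b).symm

noncomputable def idealBimod (I : Submodule ℂ A)
    (hL : ∀ a, ∀ x ∈ I, a * x ∈ I) (hR : ∀ a, ∀ x ∈ I, x * a ∈ I) :
    Bimod A I where
  l a := ((ContinuousLinearMap.mul ℂ A a).comp I.subtypeL).codRestrict I fun x => hL a x x.2
  r a := (((ContinuousLinearMap.mul ℂ A).flip a).comp I.subtypeL).codRestrict I fun x => hR a x x.2
  l_mul a b x := Subtype.ext (mul_assoc a b (x : A))
  r_mul a b x := Subtype.ext (mul_assoc (x : A) a b).symm
  lr a b x := Subtype.ext (mul_assoc a (x : A) b).symm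

structure BBM (A : Type*) [NormedRing A] [NormedAlgebra ℂ A] where
  carrier : Type*
  [grp : NormedAddCommGroup carrier]
  [mod : NormedSpace ℂ carrier]
  bimod : Bimod A carrier

attribute [instance] BBM.grp BBM.mod

noncomputable def BBM.dual {A : Type*} [NormedRing A] [NormedAlgebra ℂ A]
    (M : BBM A) : BBM A :=
  { carrier := M.carrier →L[ℂ] ℂ
    bimod := M.bimod.dual }

section

variable {Y : Type*} [NormedAddCommGroup Y] [NormedSpace ℂ Y]

structure Bimod.IsHom (M : Bimod A X) (N : Bimod A Y) (f : X →L[ℂ] Y) : Prop where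
  map_l : ∀ a x, f (M.l a x) = N.l a (f x)
  map_r : ∀ a x, f (M.r a x) = N.r a (f x)

noncomputable def dualMap (f : X →L[ℂ] Y) : (Y →L[ℂ] ℂ) →L[ℂ] (X →L[ℂ] ℂ) :=
  (compL ℂ X Y ℂ).flip f

variable {M : Bimod A X} {N : Bimod A Y}

theorem Bimod.isHom_inclusionInDoubleDual (M : Bimod A X) :
    M.IsHom M.dual.dual (NormedSpace.inclusionInDoubleDual ℂ X) :=
  ⟨fun _ _ => rfl, fun _ _ => rfl⟩

theorem Bimod.IsHom.dualMap {f : X →L[ℂ] Y} (hf : M.IsHom N f) :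
    N.dual.IsHom M.dual (Paper.dualMap f) where
  map_l a g := ext fun x => congrArg g (hf.map_r a x).symm
  map_r a g := ext fun x => congrArg g (hf.map_l a x).symm

theorem IsDerivation.comp {f : X →L[ℂ] Y} {D : A →L[ℂ] X} (hf : M.IsHom N f)
    (hD : IsDerivation M D) : IsDerivation N (f.comp D) := fun a b => by
  simp only [coe_comp, Function.comp_apply, hD a b, map_add, hf.map_l, hf.map_r]

theorem IsInner.of_comp {ι : X →L[ℂ] Y} {π : Y →L[ℂ] X} {D : A →L[ℂ] X}
    (hπ : N.IsHom M π) (hπι : ∀ x, π (ι x) = x) (hD : IsInner N (ι.comp D)) :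
    IsInner M D := by
  obtain ⟨y, hy⟩ := hD
  refine ⟨π y, fun a => ?_⟩
  rw [← hπ.map_l, ← hπ.map_r, ← map_sub, ← hy, coe_comp, Function.comp_apply, hπι]

theorem isInner_of_retract {ι : X →L[ℂ] Y} {π : Y →L[ℂ] X}
    (hι : M.IsHom N ι) (hπ : N.IsHom M π) (hπι : ∀ x, π (ι x) = x)
    (hN : ∀ D : A →L[ℂ] Y, IsDerivation N D → IsInner N D)
    (D : A →L[ℂ] X) (hD : IsDerivation M D) : IsInner M D :=
  (hN _ (hD.comp hι)).of_comp hπ hπι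

theorem Bimod.isInner_dual_of_isInner_tripleDual (M : Bimod A X)
    -- spelling out the triple dual here defeats instance search for its topology
    (h : ∀ D : A →L[ℂ] _, IsDerivation M.dual.dual.dual D → IsInner M.dual.dual.dual D)
    (D : A →L[ℂ] (X →L[ℂ] ℂ)) (hD : IsDerivation M.dual D) : IsInner M.dual D :=
  isInner_of_retract M.dual.isHom_inclusionInDoubleDual
    M.isHom_inclusionInDoubleDual.dualMap (fun _ => rfl) h D hD

end

theorem stmt_3
    {A : Type*} [NormedRing A] [NormedAlgebra ℂ A]
    (M : BBM A) (n : ℕ) (hn : 1 ≤ n)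
    (h : ∀ D : A →L[ℂ] (BBM.dual^[n + 2] M).carrier,
        IsDerivation (BBM.dual^[n + 2] M).bimod D → IsInner (BBM.dual^[n + 2] M).bimod D) :
    ∀ D : A →L[ℂ] (BBM.dual^[n] M).carrier,
      IsDerivation (BBM.dual^[n] M).bimod D → IsInner (BBM.dual^[n] M).bimod D := by
  obtain ⟨m, rfl⟩ := Nat.exists_eq_add_of_le' hn
  rw [show m + 1 + 2 = m + 1 + 1 + 1 from rfl, Function.iterate_succ_apply',
    Function.iterate_succ_apply', Function.iterate_succ_apply'] at h
  rw [Function.iterate_succ_apply']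
  exact (BBM.dual^[m] M).bimod.isInner_dual_of_isInner_tripleDual h

end Paper
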